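/- The duality Δ_n is the unique order-reversing bijection of the lattice K_n of codes of Enriques diagrams of complexity n onto itself. -/

import Mathlib

/-- Symbols of Enriques diagrams: `Sum.inl k` is the vertex `v_k`,
`Sum.inr k` is the edge `e_k`. -/
abbrev ESym : Type := ℕ ⊕ ℕ

def vtx (k : ℕ) : ESym := Sum.inl k
def edg (k : ℕ) : ESym := Sum.inr k

/-- The set `S_n = {v_2,…,v_{n-2}, e_2,…,e_{n-2}}` of undetermined symbols. -/
def symbols (n : ℕ) : Finset ESym :=
  ((Finset.Icc 2 (n - 2)).image vtx) ∪ ((Finset.Icc 2 (n - 2)).image edg)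

/-- A code of an Enriques diagram of complexity `n`: a subset `χ ⊆ S_n` such that
`v_i ∈ χ` implies `e_i ∈ χ` and (`e_{i+1} ∈ χ` or `i = n-2`). -/
def IsCode (n : ℕ) (χ : Finset ESym) : Prop :=
  χ ⊆ symbols n ∧
    ∀ i ∈ Finset.Icc 2 (n - 2), vtx i ∈ χ →
      edg i ∈ χ ∧ (edg (i + 1) ∈ χ ∨ i = n - 2)

instance (n : ℕ) : DecidablePred (IsCode n) := fun χ => by
  unfold IsCode; infer_instance

/-- The duality `Δ_n` on codes: `v_k ∈ Δ_n(χ)` iff `e_{n-k} ∉ χ`, and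
`e_k ∈ Δ_n(χ)` iff `v_{n-k} ∉ χ` (for `k ∈ {2,…,n-2}`). -/
def dual (n : ℕ) (χ : Finset ESym) : Finset ESym :=
  ((Finset.Icc 2 (n - 2)).filter (fun k => edg (n - k) ∉ χ)).image vtx ∪
  ((Finset.Icc 2 (n - 2)).filter (fun k => vtx (n - k) ∉ χ)).image edg

/-!
`Δ_n` is an order-reversing involution of `K_n`, so for an order-reversing bijection `f` the map
`Δ_n ∘ f` is a monotone bijection of the finite poset `K_n`, hence an order automorphism, and it
suffices to show that `K_n` has no nontrivial automorphism.

Codes are closed under union, and the join-irreducible codes are the least codes containing one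
symbol: `{e_k}` and `{v_k, e_k, e_{k+1}}` (only `{v_{n-2}, e_{n-2}}` for `k = n - 2`). Under
inclusion they form the fence `e_2 < v_2 > e_3 < v_3 > ⋯ > e_{n-2} < v_{n-2}`. An automorphism
permutes the join-irreducibles and preserves atoms, i.e. edges; since `v_{n-2}` is the only vertex
above a single edge, it fixes the fence from the top down. Finally a code is determined by the
join-irreducibles below it.
-/

open Finset

section Symbols

variable {n j k : ℕ}

@[simp] lemma vtx_inj : vtx j = vtx k ↔ j = k := Sum.inl.inj_iff
@[simp] lemma edg_inj : edg j = edg k ↔ j = k := Sum.inr.inj_iff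
@[simp] lemma vtx_ne_edg : vtx j ≠ edg k := Sum.inl_ne_inr
@[simp] lemma edg_ne_vtx : edg j ≠ vtx k := Sum.inr_ne_inl

@[simp] lemma vtx_mem_symbols : vtx k ∈ symbols n ↔ k ∈ Icc 2 (n - 2) := by
  simp [symbols]

@[simp] lemma edg_mem_symbols : edg k ∈ symbols n ↔ k ∈ Icc 2 (n - 2) := by
  simp [symbols]

end Symbols

section Duality

variable {n k : ℕ} {χ ψ : Finset ESym}

@[simp] lemma vtx_mem_dual : vtx k ∈ dual n χ ↔ k ∈ Icc 2 (n - 2) ∧ edg (n - k) ∉ χ := by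
  simp [dual]

@[simp] lemma edg_mem_dual : edg k ∈ dual n χ ↔ k ∈ Icc 2 (n - 2) ∧ vtx (n - k) ∉ χ := by
  simp [dual]

lemma isCode_dual (h : IsCode n χ) : IsCode n (dual n χ) := by
  refine ⟨fun x hx => ?_, fun i hi hv => ?_⟩
  · rcases x with k | k
    · exact vtx_mem_symbols.2 (vtx_mem_dual.1 hx).1
    · exact edg_mem_symbols.2 (edg_mem_dual.1 hx).1
  · have hi' := mem_Icc.1 hi
    have he : edg (n - i) ∉ χ := (vtx_mem_dual.1 hv).2
    refine ⟨edg_mem_dual.2 ⟨hi, fun hvi => he (h.2 _ (by simp only [mem_Icc]; omega) hvi).1⟩, ?_⟩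
    rcases eq_or_ne i (n - 2) with hi2 | hi2
    · exact Or.inr hi2
    refine Or.inl (edg_mem_dual.2 ⟨by simp only [mem_Icc]; omega, fun hvi => ?_⟩)
    have := (h.2 _ (by simp only [mem_Icc]; omega) hvi).2
    rw [show n - (i + 1) + 1 = n - i by omega] at this
    exact this.elim he (by omega)

lemma dual_dual (hχ : χ ⊆ symbols n) : dual n (dual n χ) = χ := by
  have reflect : ∀ k ∈ Icc 2 (n - 2), n - k ∈ Icc 2 (n - 2) ∧ n - (n - k) = k := by
    intro k hk; simp only [mem_Icc] at hk ⊢; omega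
  ext (k | k)
  · change vtx k ∈ _ ↔ vtx k ∈ χ
    by_cases hk : k ∈ Icc 2 (n - 2)
    · simp [hk, reflect k hk]
    · simpa [hk] using fun h => hk (vtx_mem_symbols.1 (hχ h))
  · change edg k ∈ _ ↔ edg k ∈ χ
    by_cases hk : k ∈ Icc 2 (n - 2)
    · simp [hk, reflect k hk]
    · simpa [hk] using fun h => hk (edg_mem_symbols.1 (hχ h))

lemma dual_subset_dual (h : χ ⊆ ψ) : dual n ψ ⊆ dual n χ := by
  unfold dual
  gcongr with k

end Duality

section OrderTheory

variable {α β : Type*}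

/-- The map induced on the finite set of related pairs is injective, hence surjective. -/
theorem Monotone.le_iff_le_of_bijective [Preorder α] [Finite α] {f : α → α} (hf : Monotone f)
    (hb : Function.Bijective f) {a b : α} : f a ≤ f b ↔ a ≤ b := by
  let F : {p : α × α // p.1 ≤ p.2} → {p : α × α // p.1 ≤ p.2} :=
    fun p => ⟨(f p.1.1, f p.1.2), hf p.2⟩
  have hF : F.Injective := fun p q hpq => by
    simp only [F, Subtype.mk.injEq, Prod.mk.injEq] at hpq
    exact Subtype.ext (Prod.ext (hb.1 hpq.1) (hb.1 hpq.2))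
  refine ⟨fun hab => ?_, fun hab => hf hab⟩
  obtain ⟨⟨⟨a', b'⟩, hle⟩, hp⟩ := Finite.surjective_of_injective hF ⟨(f a, f b), hab⟩
  simp only [F, Subtype.mk.injEq, Prod.mk.injEq] at hp
  rwa [← hb.1 hp.1, ← hb.1 hp.2]

theorem SupIrred.map [SemilatticeSup α] [SemilatticeSup β] {a : α} (ha : SupIrred a)
    (e : α ≃o β) : SupIrred (e a) := by
  refine ⟨fun hmin => ha.1 fun b hb => e.le_iff_le.1 (hmin (e.le_iff_le.2 hb)), fun b c hbc => ?_⟩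
  have := ha.2 (show e.symm b ⊔ e.symm c = a by rw [← e.symm.map_sup, hbc, e.symm_apply_apply])
  simpa only [e.symm_apply_eq] using this

end OrderTheory

lemma isCode_empty (n : ℕ) : IsCode n ∅ := ⟨empty_subset _, by simp⟩

lemma isCode_union {n : ℕ} {χ ψ : Finset ESym} (hχ : IsCode n χ) (hψ : IsCode n ψ) :
    IsCode n (χ ∪ ψ) := by
  refine ⟨union_subset hχ.1 hψ.1, fun i hi hv => ?_⟩
  rcases mem_union.1 hv with h | h
  · obtain ⟨he, he'⟩ := hχ.2 i hi h
    exact ⟨mem_union_left _ he, he'.imp_left (mem_union_left _)⟩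
  · obtain ⟨he, he'⟩ := hψ.2 i hi h
    exact ⟨mem_union_right _ he, he'.imp_left (mem_union_right _)⟩

/-- The lattice `K_n`. -/
abbrev Code (n : ℕ) := {χ : Finset ESym // IsCode n χ}

namespace Code

variable {n j k : ℕ}

instance : SemilatticeSup (Code n) := Subtype.semilatticeSup fun _ _ => isCode_union

instance : OrderBot (Code n) := Subtype.orderBot (isCode_empty n)

instance : Finite (Code n) :=
  Finite.of_injective (fun χ : Code n => (⟨χ.1, mem_powerset.2 χ.2.1⟩ : (symbols n).powerset))
    fun _ _ h => Subtype.ext (congrArg Subtype.val h :)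

@[simp] lemma coe_bot : ((⊥ : Code n) : Finset ESym) = ∅ := rfl

@[simp] lemma coe_sup (χ ψ : Code n) : ((χ ⊔ ψ : Code n) : Finset ESym) = χ.1 ∪ ψ.1 := rfl

def genSymbols : ESym → Finset ESym
  | .inl k => {vtx k, edg k, edg (k + 1)}
  | .inr k => {edg k}

lemma isCode_genSymbols_inter (n : ℕ) (x : ESym) : IsCode n (genSymbols x ∩ symbols n) := by
  refine ⟨inter_subset_right, fun i hi hv => ?_⟩
  rcases x with k | k
  · simp only [genSymbols, mem_inter, mem_insert, mem_singleton, vtx_inj, vtx_ne_edg,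
      or_false, edg_inj, vtx_mem_symbols, edg_mem_symbols, mem_Icc] at hv ⊢
    omega
  · simp [genSymbols, vtx, edg] at hv

/-- The least code containing the symbol `x ∈ S_n`; these are the join-irreducibles of `K_n`. -/
def gen (n : ℕ) (x : ESym) : Code n := ⟨_, isCode_genSymbols_inter n x⟩

@[simp] lemma mem_gen_vtx {y : ESym} :
    y ∈ (gen n (vtx k)).1 ↔ (y = vtx k ∨ y = edg k ∨ y = edg (k + 1)) ∧ y ∈ symbols n := by
  simp [gen, genSymbols, vtx]

@[simp] lemma mem_gen_edg {y : ESym} : y ∈ (gen n (edg k)).1 ↔ y = edg k ∧ y ∈ symbols n := by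
  simp [gen, genSymbols, edg]

lemma edg_mem_gen_vtx :
    edg j ∈ (gen n (vtx k)).1 ↔ (j = k ∨ j = k + 1) ∧ j ∈ Icc 2 (n - 2) := by
  simp

variable {x : ESym}

lemma mem_gen_self (hx : x ∈ symbols n) : x ∈ (gen n x).1 := by
  rcases x with k | k
  · exact mem_gen_vtx.2 ⟨Or.inl rfl, hx⟩
  · exact mem_gen_edg.2 ⟨rfl, hx⟩

lemma gen_le_iff (hx : x ∈ symbols n) {χ : Code n} : gen n x ≤ χ ↔ x ∈ χ.1 := by
  refine ⟨fun h => h (mem_gen_self hx), fun h y hy => ?_⟩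
  rcases x with k | k
  · obtain ⟨hek, hek'⟩ := χ.2.2 k (vtx_mem_symbols.1 hx) h
    obtain ⟨rfl | rfl | rfl, hy⟩ := mem_gen_vtx.1 hy
    · exact h
    · exact hek
    · exact hek'.resolve_right fun hk => by simp only [edg_mem_symbols, mem_Icc] at hy; omega
  · obtain ⟨rfl, -⟩ := mem_gen_edg.1 hy
    exact h

lemma finset_sup_gen (χ : Code n) : χ.1.sup (gen n) = χ :=
  le_antisymm (Finset.sup_le fun _ hx => (gen_le_iff (χ.2.1 hx)).2 hx)
    fun x hx => (le_sup (f := gen n) hx : gen n x ≤ _) (mem_gen_self (χ.2.1 hx))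

lemma supIrred_gen (hx : x ∈ symbols n) : SupIrred (gen n x) := by
  refine ⟨fun hmin => ?_, fun a b hab => ?_⟩
  · simpa using hmin (bot_le : ⊥ ≤ gen n x) (mem_gen_self hx)
  · have hx' : x ∈ a.1 ∪ b.1 := by rw [← coe_sup, hab]; exact mem_gen_self hx
    rcases mem_union.1 hx' with h | h
    · exact Or.inl (le_antisymm (hab ▸ le_sup_left) ((gen_le_iff hx).2 h))
    · exact Or.inr (le_antisymm (hab ▸ le_sup_right) ((gen_le_iff hx).2 h))

lemma supIrred_iff {χ : Code n} : SupIrred χ ↔ ∃ x ∈ symbols n, gen n x = χ := by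
  refine ⟨fun h => ?_, fun ⟨x, hx, hχ⟩ => hχ ▸ supIrred_gen hx⟩
  obtain ⟨x, hx, hχ⟩ := h.finset_sup_eq (finset_sup_gen χ)
  exact ⟨x, χ.2.1 hx, hχ⟩

lemma not_isAtom_gen_vtx (hk : k ∈ Icc 2 (n - 2)) : ¬IsAtom (gen n (vtx k)) := by
  intro h
  have hlt : gen n (edg k) < gen n (vtx k) :=
    lt_of_le_of_ne ((gen_le_iff (edg_mem_symbols.2 hk)).2 (by simp [hk]))
      fun he => by simpa [hk] using congrArg (vtx k ∈ ·.1) he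
  simpa [hk] using congrArg (edg k ∈ ·.1) (h.2 _ hlt)

lemma isAtom_gen_edg (hk : k ∈ Icc 2 (n - 2)) : IsAtom (gen n (edg k)) := by
  refine ⟨fun h => by simpa [hk] using congrArg (edg k ∈ ·.1) h, fun b hb => ?_⟩
  refine Subtype.ext (eq_empty_of_forall_notMem fun y hy => ?_)
  obtain ⟨rfl, hy'⟩ := mem_gen_edg.1 (hb.le hy)
  exact hb.not_ge ((gen_le_iff hy').2 hy)

section Automorphism

variable (g : Code n ≃o Code n)

lemma exists_map_gen (hx : x ∈ symbols n) : ∃ y ∈ symbols n, g (gen n x) = gen n y := by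
  obtain ⟨y, hy, hgy⟩ := supIrred_iff.1 ((supIrred_gen hx).map g)
  exact ⟨y, hy, hgy.symm⟩

lemma exists_map_gen_vtx (hk : k ∈ Icc 2 (n - 2)) :
    ∃ m ∈ Icc 2 (n - 2), g (gen n (vtx k)) = gen n (vtx m) := by
  obtain ⟨m | m, hm, hgm⟩ := exists_map_gen g (vtx_mem_symbols.2 hk)
  · exact ⟨m, vtx_mem_symbols.1 hm, hgm⟩
  · refine absurd ((g.isAtom_iff _).1 ?_) (not_isAtom_gen_vtx hk)
    rw [hgm]
    exact isAtom_gen_edg (edg_mem_symbols.1 hm)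

lemma exists_map_gen_edg (hk : k ∈ Icc 2 (n - 2)) :
    ∃ m ∈ Icc 2 (n - 2), g (gen n (edg k)) = gen n (edg m) := by
  obtain ⟨m | m, hm, hgm⟩ := exists_map_gen g (edg_mem_symbols.2 hk)
  · refine absurd ?_ (not_isAtom_gen_vtx (vtx_mem_symbols.1 hm))
    change IsAtom (gen n (Sum.inl m))
    rw [← hgm, g.isAtom_iff]
    exact isAtom_gen_edg hk
  · exact ⟨m, edg_mem_symbols.1 hm, hgm⟩

lemma map_gen_vtx_top (h : n - 2 ∈ Icc 2 (n - 2)) :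
    g (gen n (vtx (n - 2))) = gen n (vtx (n - 2)) := by
  obtain ⟨m, hm, hgm⟩ := exists_map_gen_vtx g h
  obtain rfl | hmn := (mem_Icc.1 hm).2.eq_or_lt
  · exact hgm
  -- `e_m` and `e_{m+1}` lie below `g v_{n-2}`, so their preimages lie below `v_{n-2}`,
  -- whose only edge is `e_{n-2}`.
  have pull : ∀ j ∈ Icc 2 (n - 2), (j = m ∨ j = m + 1) →
      g.symm (gen n (edg j)) = gen n (edg (n - 2)) := by
    intro j hj hjm
    obtain ⟨a, ha, hga⟩ := exists_map_gen_edg g.symm hj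
    have hle : g.symm (gen n (edg j)) ≤ gen n (vtx (n - 2)) := by
      rw [g.symm_apply_le, hgm, gen_le_iff (edg_mem_symbols.2 hj)]
      simpa [hj] using hjm
    rw [hga, gen_le_iff (edg_mem_symbols.2 ha)] at hle
    rw [hga, show a = n - 2 by simp only [edg_mem_gen_vtx, mem_Icc] at hle; omega]
  have hm1 : m + 1 ∈ Icc 2 (n - 2) := by simp only [mem_Icc] at hm ⊢; omega
  have := g.symm.injective ((pull m hm (Or.inl rfl)).trans (pull (m + 1) hm1 (Or.inr rfl)).symm)
  simpa [hm] using congrArg (edg m ∈ ·.1) this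

lemma map_gen_edg (hk : k ∈ Icc 2 (n - 2)) (hv : g (gen n (vtx k)) = gen n (vtx k))
    (hnext : k ≠ n - 2 → g (gen n (edg (k + 1))) = gen n (edg (k + 1))) :
    g (gen n (edg k)) = gen n (edg k) := by
  obtain ⟨j, hj, hgj⟩ := exists_map_gen_edg g hk
  have hle : gen n (edg j) ≤ gen n (vtx k) := by
    rw [← hgj, ← hv, g.le_iff_le, gen_le_iff (edg_mem_symbols.2 hk)]
    simp [hk]
  rw [gen_le_iff (edg_mem_symbols.2 hj)] at hle
  obtain rfl | rfl : j = k ∨ j = k + 1 := (edg_mem_gen_vtx.1 hle).1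
  · exact hgj
  · have := g.injective (hgj.trans (hnext (by simp only [mem_Icc] at hj; omega)).symm)
    simpa [hk] using congrArg (edg k ∈ ·.1) this

lemma map_gen_vtx_of_succ (hk : k ∈ Icc 2 (n - 2)) (hk' : k ≠ n - 2)
    (hv : g (gen n (vtx (k + 1))) = gen n (vtx (k + 1)))
    (he : g (gen n (edg (k + 1))) = gen n (edg (k + 1))) :
    g (gen n (vtx k)) = gen n (vtx k) := by
  have hk1 : k + 1 ∈ Icc 2 (n - 2) := by simp only [mem_Icc] at hk ⊢; omega
  obtain ⟨m, hm, hgm⟩ := exists_map_gen_vtx g hk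
  have hle : gen n (edg (k + 1)) ≤ gen n (vtx m) := by
    rw [← hgm, ← he, g.le_iff_le, gen_le_iff (edg_mem_symbols.2 hk1)]
    simp [hk1]
  rw [gen_le_iff (edg_mem_symbols.2 hk1)] at hle
  obtain rfl | rfl : m = k + 1 ∨ m = k := by simp only [edg_mem_gen_vtx] at hle; omega
  · have := g.injective (hgm.trans hv.symm)
    simpa [hk] using congrArg (vtx k ∈ ·.1) this
  · exact hgm

lemma map_gen_vtx_and_map_gen_edg (hk : k ∈ Icc 2 (n - 2)) :
    g (gen n (vtx k)) = gen n (vtx k) ∧ g (gen n (edg k)) = gen n (edg k) := by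
  obtain ⟨hk2, hkn⟩ := mem_Icc.1 hk
  refine Nat.decreasingInduction' (fun j hj hkj ih => ?_) hkn ?_
  · have hjI : j ∈ Icc 2 (n - 2) := mem_Icc.2 ⟨hk2.trans hkj, hj.le⟩
    have hv := map_gen_vtx_of_succ g hjI hj.ne ih.1 ih.2
    exact ⟨hv, map_gen_edg g hjI hv fun _ => ih.2⟩
  · have htop : n - 2 ∈ Icc 2 (n - 2) := mem_Icc.2 ⟨hk2.trans hkn, le_rfl⟩
    have hv := map_gen_vtx_top g htop
    exact ⟨hv, map_gen_edg g htop hv fun h => absurd rfl h⟩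

lemma map_gen (hx : x ∈ symbols n) : g (gen n x) = gen n x := by
  rcases x with k | k
  · exact (map_gen_vtx_and_map_gen_edg g (vtx_mem_symbols.1 hx)).1
  · exact (map_gen_vtx_and_map_gen_edg g (edg_mem_symbols.1 hx)).2

theorem orderIso_apply_eq (χ : Code n) : g χ = χ := by
  refine Subtype.ext (Finset.ext fun y => ?_)
  by_cases hy : y ∈ symbols n
  · rw [← gen_le_iff hy, ← gen_le_iff hy]
    simpa only [map_gen g hy] using g.le_iff_le (x := gen n y) (y := χ)
  · exact iff_of_false (fun h => hy ((g χ).2.1 h)) fun h => hy (χ.2.1 h)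

end Automorphism

end Code

theorem stmt5_general (n : ℕ)
    (f : {χ : Finset ESym // IsCode n χ} → {χ : Finset ESym // IsCode n χ})
    (hbij : Function.Bijective f)
    (hrev : ∀ a b : {χ : Finset ESym // IsCode n χ}, a.1 ⊆ b.1 → (f b).1 ⊆ (f a).1) :
    ∀ a : {χ : Finset ESym // IsCode n χ}, (f a).1 = dual n a.1 := by
  let d : Code n → Code n := fun χ => ⟨dual n χ.1, isCode_dual χ.2⟩
  have hd : Function.Involutive d := fun χ => Subtype.ext (dual_dual χ.2.1)
  have hb : Function.Bijective (d ∘ f) := hd.bijective.comp hbij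
  have hmono : Monotone (d ∘ f) := fun a b hab => dual_subset_dual (hrev a b hab)
  let g : Code n ≃o Code n :=
    { Equiv.ofBijective _ hb with map_rel_iff' := hmono.le_iff_le_of_bijective hb }
  intro a
  calc (f a).1 = (d (d (f a))).1 := by rw [hd]
    _ = dual n a.1 := by rw [show d (f a) = a from Code.orderIso_apply_eq g a]

/-- `Δ_n` is the unique order-reversing bijection of the lattice `K_n` of codes
onto itself. -/
theorem stmt5 (n : ℕ) (hn : 3 ≤ n)
    (f : {χ : Finset ESym // IsCode n χ} → {χ : Finset ESym // IsCode n χ})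
    (hbij : Function.Bijective f)
    (hrev : ∀ a b : {χ : Finset ESym // IsCode n χ}, a.1 ⊆ b.1 → (f b).1 ⊆ (f a).1) :
    ∀ a : {χ : Finset ESym // IsCode n χ}, (f a).1 = dual n a.1 :=
  stmt5_general n f hbij hrev
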